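/- For the n-gonal bipyramid BP_n with n = 2k and k odd, there are exactly two zigzags up to reversal, each of length 3n. -/

import Mathlib

open Finset
open scoped Classical

/-- A combinatorial triangulation: a finite collection of (triangular) faces,
each given as a finite set of vertices. -/
structure Triangulation (V : Type) where
  faces : Finset (Finset V)

namespace Triangulation

variable {V : Type} [DecidableEq V] (T : Triangulation V)

/-- The edges: the 2-element subsets of faces. -/
def edges : Finset (Finset V) := T.faces.biUnion fun f => f.powersetCard 2

/-- The vertices actually used by the triangulation. -/
def verts : Finset V := T.faces.sup id

/-- The combinatorial axioms of a triangulation of a closed surface: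
faces are triangles, every edge lies in exactly two faces, and two distinct
faces meet in at most an edge. -/
def IsProper : Prop :=
  (∀ f ∈ T.faces, f.card = 3) ∧
  (∀ e ∈ T.edges, (T.faces.filter fun f => e ⊆ f).card = 2) ∧
  (∀ f ∈ T.faces, ∀ g ∈ T.faces, f ≠ g → (f ∩ g).card ≤ 2)

/-- The underlying (simple) graph of the triangulation. -/
def graph : SimpleGraph V where
  Adj x y := x ≠ y ∧ ({x, y} : Finset V) ∈ T.edges
  symm := ⟨fun x y h => ⟨h.1.symm, by rw [Finset.pair_comm y x]; exact h.2⟩⟩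
  loopless := ⟨fun x h => h.1 rfl⟩

/-- A zigzag: a bi-infinite periodic sequence of edges `e i` together with the
face `f i` containing the consecutive edges `e i` and `e (i+1)`, such that
consecutive faces are distinct and edges two apart are disjoint.
`head i` is the (unique) common vertex of `e i` and `e (i+1)`; thus the `i`-th
traversal goes from `head (i-1)` to `head i`. -/
structure Zigzag where
  e : ℤ → Finset V
  f : ℤ → Finset V
  head : ℤ → V
  e_mem : ∀ i, e i ∈ T.edges
  f_mem : ∀ i, f i ∈ T.faces
  sub_left : ∀ i, e i ⊆ f i
  sub_right : ∀ i, e (i + 1) ⊆ f i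
  edges_ne : ∀ i, e i ≠ e (i + 1)
  faces_ne : ∀ i, f i ≠ f (i + 1)
  disj : ∀ i, Disjoint (e i) (e (i + 2))
  inter_eq : ∀ i, e i ∩ e (i + 1) = {head i}
  exists_period : ∃ n : ℕ, 0 < n ∧ ∀ i, e (i + n) = e i ∧ f (i + n) = f i ∧ head (i + n) = head i

namespace Zigzag

variable {T}

/-- The length of a zigzag: the minimal period of its edge sequence. -/
noncomputable def length (Z : Zigzag T) : ℕ :=
  sInf {n : ℕ | 0 < n ∧ ∀ i, Z.e (i + n) = Z.e i}

/-- How many times the edge `a` occurs in one (minimal) period of `Z`. -/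
noncomputable def mult (Z : Zigzag T) (a : Finset V) : ℕ :=
  ((Finset.range Z.length).filter fun i => Z.e (i : ℤ) = a).card

/-- The direction (tail, head) of the `i`-th traversal of `Z`. -/
def dir (Z : Zigzag T) (i : ℤ) : V × V := (Z.head (i - 1), Z.head i)

/-- Two zigzags are the same cyclic sequence up to rotation or rotation
combined with reversal. -/
def Equiv (Z W : Zigzag T) : Prop :=
  (∃ k : ℤ, ∀ i, W.e i = Z.e (i + k)) ∨ (∃ k : ℤ, ∀ i, W.e i = Z.e (k - i))

end Zigzag

/-- A triangulation is z-knotted if it has a single zigzag up to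
rotation and reversal. -/
def IsZKnotted : Prop := Nonempty (Zigzag T) ∧ ∀ Z W : Zigzag T, Z.Equiv W

/-- A z-orientation: a collection of pairwise non-equivalent zigzags which
double covers the edge set. -/
structure ZOrientation where
  zigzags : List (Zigzag T)
  cover : ∀ a ∈ T.edges, (zigzags.map fun Z => Z.mult a).sum = 2
  nonequiv : zigzags.Pairwise fun Z W => ¬ Z.Equiv W

namespace ZOrientation

variable {T}

/-- All traversals of the edge `a` by the distinguished zigzags go in the
direction `d`. -/
def dirOf (τ : ZOrientation T) (a : Finset V) (d : V × V) : Prop :=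
  ∀ Z ∈ τ.zigzags, ∀ i : ℤ, Z.e i = a → Z.dir i = d

/-- An edge of type II: both traversals go in the same direction. -/
def TypeII (τ : ZOrientation T) (a : Finset V) : Prop := ∃ d, τ.dirOf a d

/-- An edge of type I: the two traversals go in different directions. -/
def TypeI (τ : ZOrientation T) (a : Finset V) : Prop := ¬ τ.TypeII a

/-- A vertex of type I: it belongs only to edges of type I. -/
def VertexTypeI (τ : ZOrientation T) (x : V) : Prop :=
  ∀ a ∈ T.edges, x ∈ a → τ.TypeI a

/-- A vertex of type II: it belongs to some edge of type II. -/
def VertexTypeII (τ : ZOrientation T) (x : V) : Prop :=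
  ∃ a ∈ T.edges, x ∈ a ∧ τ.TypeII a

/-- A face of type I: exactly one of its edges is of type II
(the other two being of type I). -/
def FaceTypeI (τ : ZOrientation T) (f : Finset V) : Prop :=
  ∃! a : Finset V, a ∈ f.powersetCard 2 ∧ τ.TypeII a

/-- A face of type II: all its edges are of type II and their directions
form a directed cycle. -/
def FaceTypeII (τ : ZOrientation T) (f : Finset V) : Prop :=
  ∃ x y z : V, f = {x, y, z} ∧ x ≠ y ∧ y ≠ z ∧ x ≠ z ∧
    τ.dirOf {x, y} (x, y) ∧ τ.dirOf {y, z} (y, z) ∧ τ.dirOf {z, x} (z, x)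

/-- A homogeneous zigzag: it contains precisely two edges of type I after each
edge of type II, i.e. it is a cyclic sequence of blocks (II, I, I). -/
def Homogeneous (τ : ZOrientation T) (Z : Zigzag T) : Prop :=
  ∃ k : ℤ, ∀ i : ℤ, τ.TypeII (Z.e (k + 3 * i)) ∧
    τ.TypeI (Z.e (k + 3 * i + 1)) ∧ τ.TypeI (Z.e (k + 3 * i + 2))

/-- The in-degree of a vertex in the digraph of type II edges. -/
noncomputable def inDeg (τ : ZOrientation T) (x : V) : ℕ :=
  (T.edges.filter fun a => τ.TypeII a ∧ ∃ u, a = {u, x} ∧ τ.dirOf a (u, x)).card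

/-- The out-degree of a vertex in the digraph of type II edges. -/
noncomputable def outDeg (τ : ZOrientation T) (x : V) : ℕ :=
  (T.edges.filter fun a => τ.TypeII a ∧ ∃ u, a = {x, u} ∧ τ.dirOf a (x, u)).card

/-- A special pair: two type II edges with a common vertex which are
interleaved in the zigzag `Z` as a, b, a, b within one period. -/
def SpecialPair (τ : ZOrientation T) (Z : Zigzag T) (a b : Finset V) : Prop :=
  a ≠ b ∧ (a ∩ b).Nonempty ∧ τ.TypeII a ∧ τ.TypeII b ∧
  ∃ i₁ i₂ i₃ i₄ : ℤ, i₁ < i₂ ∧ i₂ < i₃ ∧ i₃ < i₄ ∧ i₄ < i₁ + (Z.length : ℤ) ∧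
    Z.e i₁ = a ∧ Z.e i₂ = b ∧ Z.e i₃ = a ∧ Z.e i₄ = b

/-- Two special pairs `c₁,c₂` and `t₁,t₂` are concordant: the zigzag
interleaves them in the cyclic pattern c₁,t₁,c₂,t₂,c₁,t₁,c₂,t₂. -/
def Concordant (τ : ZOrientation T) (Z : Zigzag T) (c₁ c₂ t₁ t₂ : Finset V) : Prop :=
  τ.SpecialPair Z c₁ c₂ ∧ τ.SpecialPair Z t₁ t₂ ∧
  (c₁ ≠ t₁ ∧ c₁ ≠ t₂ ∧ c₂ ≠ t₁ ∧ c₂ ≠ t₂) ∧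
  ∃ i₁ i₂ i₃ i₄ i₅ i₆ i₇ i₈ : ℤ,
    i₁ < i₂ ∧ i₂ < i₃ ∧ i₃ < i₄ ∧ i₄ < i₅ ∧ i₅ < i₆ ∧ i₆ < i₇ ∧ i₇ < i₈ ∧
    i₈ < i₁ + (Z.length : ℤ) ∧
    Z.e i₁ = c₁ ∧ Z.e i₂ = t₁ ∧ Z.e i₃ = c₂ ∧ Z.e i₄ = t₂ ∧
    Z.e i₅ = c₁ ∧ Z.e i₆ = t₁ ∧ Z.e i₇ = c₂ ∧ Z.e i₈ = t₂

end ZOrientation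

end Triangulation

/-- The `n`-gonal bipyramid: two apexes (the `Bool` vertices) joined to every
vertex of an `n`-cycle. -/
def BP (n : ℕ) [NeZero n] : Triangulation (Bool ⊕ ZMod n) where
  faces := Finset.univ.image fun p : Bool × ZMod n =>
    ({Sum.inl p.1, Sum.inr p.2, Sum.inr (p.2 + 1)} : Finset (Bool ⊕ ZMod n))

/-!
Every zigzag of `BP n` (`n ≥ 3`) is, up to shift and reversal, one of the explicit zigzags
`BP.zigzag δ ε` with vertex sequence `r δ, r (δ+1), a ε, r (δ+2), r (δ+3), a (!ε), …`: in a
triangulation a zigzag is determined by two consecutive edges, and any two edges of a face are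
consecutive in one of these. Shifting by three steps turns `(δ, ε)` into `(δ + 2, !ε)`; for
`n = 2k` with `k` odd, shifting by `3k` flips `ε` alone, so only the parity of `δ` matters, and
the two parities give different zigzags because every rim edge `{r x, r (x+1)}` of `zigzag δ ε`
has `x ≡ δ (mod 2)`. The edges repeat after `3t` steps only if `2t ≡ 0 (mod n)` and `t` is even,
i.e. `n ∣ t`, so every zigzag has length `3n`.
-/

lemma Finset.eq_pair_of_subset_triple {α : Type*} [DecidableEq α] {e : Finset α} {x y z : α}
    (he : e ⊆ {x, y, z}) (hcard : e.card = 2) : e = {x, y} ∨ e = {x, z} ∨ e = {y, z} := by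
  obtain ⟨u, v, huv, rfl⟩ := Finset.card_eq_two.mp hcard
  have hu : u ∈ ({x, y, z} : Finset α) := he (by simp)
  have hv : v ∈ ({x, y, z} : Finset α) := he (by simp)
  simp only [Finset.mem_insert, Finset.mem_singleton] at hu hv
  rcases hu with rfl | rfl | rfl <;> rcases hv with rfl | rfl | rfl <;>
    simp_all [Finset.pair_comm]

namespace Triangulation

variable {V : Type} [DecidableEq V] {T : Triangulation V}

lemma card_of_mem_edges {e : Finset V} (he : e ∈ T.edges) : e.card = 2 := by
  obtain ⟨f, -, hf⟩ := Finset.mem_biUnion.mp he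
  exact (Finset.mem_powersetCard.mp hf).2

lemma mem_edges_of_subset {e f : Finset V} (hf : f ∈ T.faces) (hef : e ⊆ f) (hcard : e.card = 2) :
    e ∈ T.edges :=
  Finset.mem_biUnion.mpr ⟨f, hf, Finset.mem_powersetCard.mpr ⟨hef, hcard⟩⟩

namespace Zigzag

def ofHeads (h : ℤ → V) (hface : ∀ i, {h i, h (i + 1), h (i + 2)} ∈ T.faces)
    (hne₁ : ∀ i, h i ≠ h (i + 1)) (hne₂ : ∀ i, h i ≠ h (i + 2)) (hne₃ : ∀ i, h i ≠ h (i + 3))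
    (p : ℕ) (hp : 0 < p) (hper : ∀ i, h (i + p) = h i) : Zigzag T where
  e i := {h i, h (i + 1)}
  f i := {h i, h (i + 1), h (i + 2)}
  head i := h (i + 1)
  e_mem i := mem_edges_of_subset (hface i) (by intro x; simp; tauto)
    (Finset.card_pair (hne₁ i))
  f_mem := hface
  sub_left i := by intro x; simp; tauto
  sub_right i := by intro x; simp [add_assoc]; tauto
  edges_ne i heq := by
    have hmem : h (i + 1 + 1) ∈ ({h i, h (i + 1)} : Finset V) := heq ▸ by simp
    simp only [Finset.mem_insert, Finset.mem_singleton] at hmem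
    grind
  faces_ne i heq := by
    have hmem : h (i + 1 + 2) ∈ ({h i, h (i + 1), h (i + 2)} : Finset V) := heq ▸ by simp
    simp only [Finset.mem_insert, Finset.mem_singleton] at hmem
    grind
  disj i := by
    simp only [Finset.disjoint_insert_left, Finset.disjoint_insert_right, Finset.mem_insert,
      Finset.mem_singleton, Finset.disjoint_singleton_left]
    grind
  inter_eq i := by
    ext x
    simp only [Finset.mem_inter, Finset.mem_insert, Finset.mem_singleton]
    grind
  exists_period := ⟨p, hp, fun i => by simp [add_right_comm _ (p : ℤ), hper]⟩

def reverse (Z : Zigzag T) : Zigzag T where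
  e i := Z.e (-i)
  f i := Z.f (-(i + 1))
  head i := Z.head (-(i + 1))
  e_mem i := Z.e_mem _
  f_mem i := Z.f_mem _
  sub_left i := by simpa using Z.sub_right (-(i + 1))
  sub_right i := Z.sub_left _
  edges_ne i := by simpa [eq_comm] using Z.edges_ne (-(i + 1))
  faces_ne i h := Z.faces_ne (-(i + 1 + 1))
    (by rw [show -(i + 1 + 1) + 1 = -(i + 1) by ring]; exact h.symm)
  disj i := by simpa [disjoint_comm] using Z.disj (-(i + 2))
  inter_eq i := by simpa [Finset.inter_comm] using Z.inter_eq (-(i + 1))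
  exists_period := by
    obtain ⟨p, hp, h⟩ := Z.exists_period
    refine ⟨p, hp, fun i => ?_⟩
    simp only [show ∀ j : ℤ, -(j + p) = -j - p by intro j; ring, add_right_comm i (p : ℤ) 1]
    exact ⟨by simpa using (h (-i - p)).1.symm, by simpa using (h (-(i + 1) - p)).2.1.symm,
      by simpa using (h (-(i + 1) - p)).2.2.symm⟩

lemma Equiv.symm {Z W : Zigzag T} : Z.Equiv W → W.Equiv Z
  | .inl ⟨k, h⟩ => .inl ⟨-k, fun i => by rw [h, neg_add_cancel_right]⟩
  | .inr ⟨k, h⟩ => .inr ⟨k, fun i => by rw [h, sub_sub_cancel]⟩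

lemma Equiv.trans {X Y Z : Zigzag T} : X.Equiv Y → Y.Equiv Z → X.Equiv Z
  | .inl ⟨a, hY⟩, .inl ⟨b, hZ⟩ => .inl ⟨b + a, fun i => by rw [hZ, hY, add_assoc]⟩
  | .inl ⟨a, hY⟩, .inr ⟨b, hZ⟩ => .inr ⟨b + a, fun i => by rw [hZ, hY]; ring_nf⟩
  | .inr ⟨a, hY⟩, .inl ⟨b, hZ⟩ => .inr ⟨a - b, fun i => by rw [hZ, hY]; ring_nf⟩
  | .inr ⟨a, hY⟩, .inr ⟨b, hZ⟩ => .inl ⟨a - b, fun i => by rw [hZ, hY]; ring_nf⟩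

lemma Equiv.e_add_eq {Z W : Zigzag T} (h : Z.Equiv W) {m : ℤ} (hm : ∀ i, Z.e (i + m) = Z.e i)
    (i : ℤ) : W.e (i + m) = W.e i := by
  rcases h with ⟨k, h⟩ | ⟨k, h⟩
  · rw [h, h, add_right_comm, hm]
  · rw [h, h, ← hm (k - (i + m)), sub_add_eq_sub_sub, sub_add_cancel]

lemma Equiv.length_eq {Z W : Zigzag T} (h : Z.Equiv W) : Z.length = W.length := by
  unfold length
  congr 1
  ext m
  exact ⟨fun ⟨hm, hp⟩ => ⟨hm, h.e_add_eq hp⟩, fun ⟨hm, hp⟩ => ⟨hm, h.symm.e_add_eq hp⟩⟩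

lemma length_eq_of_forall_le {Z : Zigzag T} {p : ℕ} (hp : 0 < p) (hper : ∀ i, Z.e (i + p) = Z.e i)
    (hmin : ∀ m : ℕ, 0 < m → (∀ i, Z.e (i + m) = Z.e i) → p ≤ m) : Z.length = p :=
  le_antisymm (Nat.sInf_le ⟨hp, hper⟩) (le_csInf ⟨p, hp, hper⟩ fun m ⟨hm, hper⟩ => hmin m hm hper)

section Triangular

variable (htri : ∀ f ∈ T.faces, f.card = 3)
include htri

lemma f_eq_union (Z : Zigzag T) (i : ℤ) : Z.f i = Z.e i ∪ Z.e (i + 1) := by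
  have hunion : (Z.e i ∪ Z.e (i + 1)).card = 3 := by
    have := Finset.card_union_add_card_inter (Z.e i) (Z.e (i + 1))
    rw [Z.inter_eq, card_of_mem_edges (Z.e_mem i), card_of_mem_edges (Z.e_mem (i + 1))] at this
    simpa using this
  exact (Finset.eq_of_subset_of_card_le (Finset.union_subset (Z.sub_left i) (Z.sub_right i))
    (by rw [htri _ (Z.f_mem i), hunion])).symm

lemma e_add_two (Z : Zigzag T) (i : ℤ) : Z.e (i + 2) = Z.f (i + 1) \ Z.e i := by
  have hsub : Z.e (i + 2) ⊆ Z.f (i + 1) \ Z.e i :=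
    Finset.subset_sdiff.mpr ⟨by simpa [add_assoc] using Z.sub_right (i + 1), (Z.disj i).symm⟩
  refine Finset.eq_of_subset_of_card_le hsub ?_
  have hhead : Z.head i ∈ Z.e (i + 1) ∩ Z.e i := by simp [Finset.inter_comm, Z.inter_eq]
  have hinter : 1 ≤ (Z.f (i + 1) ∩ Z.e i).card :=
    Finset.card_pos.mpr ⟨_, Finset.inter_subset_inter_right (Z.sub_left (i + 1)) hhead⟩
  have := Finset.card_sdiff_add_card_inter (Z.f (i + 1)) (Z.e i)
  rw [htri _ (Z.f_mem _)] at this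
  rw [card_of_mem_edges (Z.e_mem _)]
  omega

variable (htwo : ∀ e ∈ T.edges, (T.faces.filter fun f => e ⊆ f).card ≤ 2)
include htwo

lemma e_add_two_congr {Z W : Zigzag T} {a b : ℤ} (h₀ : Z.e a = W.e b)
    (h₁ : Z.e (a + 1) = W.e (b + 1)) : Z.e (a + 2) = W.e (b + 2) := by
  have hf₀ : Z.f a = W.f b := by rw [f_eq_union htri, f_eq_union htri, h₀, h₁]
  -- `Z.f a = W.f b`, `Z.f (a + 1)` and `W.f (b + 1)` all contain the edge `Z.e (a + 1)`, and
  -- the first one differs from the other two.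
  have hf₁ : Z.f (a + 1) = W.f (b + 1) := by
    by_contra hne
    have hZ : Z.f a ∈ T.faces.filter fun f => Z.e (a + 1) ⊆ f :=
      Finset.mem_filter.mpr ⟨Z.f_mem _, Z.sub_right _⟩
    have hZ₁ : Z.f (a + 1) ∈ T.faces.filter fun f => Z.e (a + 1) ⊆ f :=
      Finset.mem_filter.mpr ⟨Z.f_mem _, Z.sub_left _⟩
    have hW₁ : W.f (b + 1) ∈ T.faces.filter fun f => Z.e (a + 1) ⊆ f :=
      Finset.mem_filter.mpr ⟨W.f_mem _, h₁ ▸ W.sub_left _⟩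
    have := Finset.two_lt_card.mpr
      ⟨_, hZ, _, hZ₁, _, hW₁, Z.faces_ne a, hf₀ ▸ W.faces_ne b, hne⟩
    have := htwo _ (Z.e_mem (a + 1))
    omega
  rw [e_add_two htri, e_add_two htri, h₀, hf₁]

lemma e_congr_of_add_one_of_add_two {Z W : Zigzag T} {a b : ℤ} (h₁ : Z.e (a + 1) = W.e (b + 1))
    (h₂ : Z.e (a + 2) = W.e (b + 2)) : Z.e a = W.e b := by
  have := e_add_two_congr htri htwo (Z := Z.reverse) (W := W.reverse) (a := -(a + 2))
    (b := -(b + 2)) (by simpa [reverse] using h₂)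
    (by simp only [reverse]; rwa [show -(-(a + 2) + 1) = a + 1 by ring,
      show -(-(b + 2) + 1) = b + 1 by ring])
  simpa [reverse] using this

lemma e_eq_of_e_eq_of_e_add_one_eq {Z W : Zigzag T} {a c : ℤ} (h₀ : W.e a = Z.e (a + c))
    (h₁ : W.e (a + 1) = Z.e (a + c + 1)) (i : ℤ) : W.e i = Z.e (i + c) := by
  suffices W.e i = Z.e (i + c) ∧ W.e (i + 1) = Z.e (i + c + 1) from this.1
  induction i using Int.inductionOn' (b := a) with
  | zero => exact ⟨h₀, h₁⟩
  | succ j _ ih =>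
    rw [add_right_comm j 1 c]
    exact ⟨ih.2, by simpa [add_assoc] using e_add_two_congr htri htwo ih.1 ih.2⟩
  | pred j _ ih =>
    have h₁ : W.e (j - 1 + 1) = Z.e (j - 1 + c + 1) := by
      rw [show j - 1 + 1 = j by ring, show j - 1 + c + 1 = j + c by ring]; exact ih.1
    have h₂ : W.e (j - 1 + 2) = Z.e (j - 1 + c + 2) := by
      rw [show j - 1 + 2 = j + 1 by ring, show j - 1 + c + 2 = j + c + 1 by ring]; exact ih.2
    exact ⟨e_congr_of_add_one_of_add_two htri htwo h₁ h₂, h₁⟩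

end Triangular

end Zigzag

end Triangulation

lemma ZMod.natCast_ne_zero_of_lt {a n : ℕ} (h₀ : 0 < a) (h : a < n) : (a : ZMod n) ≠ 0 :=
  fun h' => absurd (Nat.le_of_dvd h₀ ((ZMod.natCast_eq_zero_iff a n).mp h')) (by omega)

lemma Int.bodd_natCast_of_odd {k : ℕ} (hk : Odd k) : Int.bodd k = true := by
  obtain ⟨m, rfl⟩ := hk
  rw [Int.bodd_coe, Nat.bodd_add, Nat.bodd_mul]
  rfl

namespace BP

open Sum Triangulation

variable {n : ℕ}

lemma eq_of_rim_subset_face (hn : 2 < n) {s : Bool} {x y : ZMod n}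
    (h : {inr y, inr (y + 1)} ⊆ ({inl s, inr x, inr (x + 1)} : Finset (Bool ⊕ ZMod n))) :
    x = y := by
  have h₁ : (1 : ZMod n) ≠ 0 := by exact_mod_cast ZMod.natCast_ne_zero_of_lt one_pos (by omega)
  have h₂ : (2 : ZMod n) ≠ 0 := by exact_mod_cast ZMod.natCast_ne_zero_of_lt two_pos hn
  simp only [Finset.insert_subset_iff, Finset.singleton_subset_iff, Finset.mem_insert,
    Finset.mem_singleton, inr.injEq, reduceCtorEq, false_or] at h
  grind

lemma eq_of_spoke_subset_face {s t : Bool} {x y : ZMod n}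
    (h : {inl t, inr y} ⊆ ({inl s, inr x, inr (x + 1)} : Finset (Bool ⊕ ZMod n))) :
    s = t ∧ (x = y ∨ x = y - 1) := by
  simp only [Finset.insert_subset_iff, Finset.singleton_subset_iff, Finset.mem_insert,
    Finset.mem_singleton, inr.injEq, inl.injEq, reduceCtorEq, false_or, or_false] at h
  grind

-- `heads δ ε` runs through `r δ, r (δ+1), a ε, r (δ+2), r (δ+3), a (!ε), r (δ+4), …`,
-- where `r` and `a` are the rim and apex vertices.
def heads (δ : ZMod n) (ε : Bool) (i : ℤ) : Bool ⊕ ZMod n :=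
  if i % 3 = 2 then inl (ε ^^ (i / 3).bodd) else inr (δ + 2 * (i / 3 : ℤ) + (i % 3 : ℤ))

lemma heads_add_three_mul (δ : ZMod n) (ε : Bool) (i t : ℤ) :
    heads δ ε (i + 3 * t) = heads (δ + 2 * (t : ZMod n)) (ε ^^ t.bodd) i := by
  simp only [heads, Int.add_mul_emod_self_left, Int.add_mul_ediv_left _ _ three_ne_zero,
    Int.bodd_add, Int.cast_add]
  split_ifs
  · simp [Bool.xor_comm]
  · congr 1; ring

lemma heads_window (δ : ZMod n) (ε : Bool) (i : ℤ) :
    ∃ j : ℤ, (j = 0 ∨ j = 1 ∨ j = 2) ∧ ∃ δ' ε', ∀ c, heads δ ε (i + c) = heads δ' ε' (j + c) :=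
  ⟨i % 3, by omega, δ + 2 * (i / 3 : ℤ), ε ^^ (i / 3).bodd, fun c => by
    rw [← heads_add_three_mul]; congr 1; omega⟩

variable [NeZero n]

lemma mem_faces {F : Finset (Bool ⊕ ZMod n)} :
    F ∈ (BP n).faces ↔ ∃ s x, F = {inl s, inr x, inr (x + 1)} := by
  simp [BP, eq_comm]

lemma card_of_mem_faces (hn : 1 < n) {F : Finset (Bool ⊕ ZMod n)} (hF : F ∈ (BP n).faces) :
    F.card = 3 := by
  obtain ⟨s, x, rfl⟩ := mem_faces.mp hF
  have : (1 : ZMod n) ≠ 0 := by exact_mod_cast ZMod.natCast_ne_zero_of_lt one_pos hn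
  rw [Finset.card_eq_three]
  exact ⟨_, _, _, by simp, by simp, by simpa using this, rfl⟩

lemma card_filter_faces_le_two (hn : 2 < n) {e : Finset (Bool ⊕ ZMod n)} (he : e ∈ (BP n).edges) :
    ((BP n).faces.filter fun f => e ⊆ f).card ≤ 2 := by
  have hle {F₁ F₂ : Finset (Bool ⊕ ZMod n)} (h : ∀ (s : Bool) (x : ZMod n),
      e ⊆ {inl s, inr x, inr (x + 1)} →
      ({inl s, inr x, inr (x + 1)} : Finset _) = F₁ ∨ {inl s, inr x, inr (x + 1)} = F₂) :
      ((BP n).faces.filter fun f => e ⊆ f).card ≤ 2 := by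
    refine (Finset.card_le_card fun F hF => ?_).trans (Finset.card_le_two (a := F₁) (b := F₂))
    obtain ⟨hF, heF⟩ := Finset.mem_filter.mp hF
    obtain ⟨s, x, rfl⟩ := mem_faces.mp hF
    simpa using h s x heF
  obtain ⟨F, hF, he⟩ := Finset.mem_biUnion.mp he
  obtain ⟨s, x, rfl⟩ := mem_faces.mp hF
  obtain ⟨hsub, hcard⟩ := Finset.mem_powersetCard.mp he
  have hspoke (y : ZMod n) : e = {inl s, inr y} →
      ((BP n).faces.filter fun f => e ⊆ f).card ≤ 2 := by
    rintro rfl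
    refine hle (F₁ := {inl s, inr y, inr (y + 1)}) (F₂ := {inl s, inr (y - 1), inr (y - 1 + 1)})
      fun t z h => ?_
    obtain ⟨rfl, rfl | rfl⟩ := eq_of_spoke_subset_face h <;> simp
  rcases Finset.eq_pair_of_subset_triple hsub hcard with h | h | h
  · exact hspoke x h
  · exact hspoke (x + 1) h
  · subst h
    refine hle (F₁ := {inl true, inr x, inr (x + 1)}) (F₂ := {inl false, inr x, inr (x + 1)})
      fun t z h => ?_
    obtain rfl := eq_of_rim_subset_face hn h
    cases t <;> simp

lemma heads_mem_faces_and_ne (hn : 2 < n) (δ : ZMod n) (ε : Bool) (i : ℤ) :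
    {heads δ ε i, heads δ ε (i + 1), heads δ ε (i + 2)} ∈ (BP n).faces ∧
      heads δ ε i ≠ heads δ ε (i + 1) ∧ heads δ ε i ≠ heads δ ε (i + 2) ∧
      heads δ ε i ≠ heads δ ε (i + 3) := by
  have h₁ : (1 : ZMod n) ≠ 0 := by exact_mod_cast ZMod.natCast_ne_zero_of_lt one_pos (by omega)
  have h₂ : (2 : ZMod n) ≠ 0 := by exact_mod_cast ZMod.natCast_ne_zero_of_lt two_pos hn
  have h₁₂ : (1 : ZMod n) ≠ 2 := fun h => h₁ (by linear_combination -h)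
  obtain ⟨j, hj, δ, ε, h⟩ := heads_window δ ε i
  have h₀ := h 0
  rw [add_zero] at h₀
  rw [h₀, h 1, h 2, h 3, mem_faces]
  rcases hj with rfl | rfl | rfl
  · exact ⟨⟨ε, δ, by ext; simp [heads]; tauto⟩, by simp [heads, h₁, h₂]⟩
  · exact ⟨⟨ε, δ + 1, by ext; simp [heads, add_assoc, one_add_one_eq_two]; tauto⟩,
      by simp [heads, h₂, h₁₂]⟩
  · exact ⟨⟨ε, δ + 2, by ext; simp [heads]⟩, by simp [heads]⟩

def zigzag (hn : 2 < n) (δ : ZMod n) (ε : Bool) : (BP n).Zigzag :=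
  Zigzag.ofHeads (heads δ ε) (fun i => (heads_mem_faces_and_ne hn δ ε i).1) (fun i => (heads_mem_faces_and_ne hn δ ε i).2.1)
    (fun i => (heads_mem_faces_and_ne hn δ ε i).2.2.1) (fun i => (heads_mem_faces_and_ne hn δ ε i).2.2.2) (6 * n)
    (by have := NeZero.pos n; omega) fun i => by
      rw [show ((6 * n : ℕ) : ℤ) = 3 * (2 * n) by push_cast; ring, heads_add_three_mul]
      simp [Int.bodd_mul, Int.bodd_two]

lemma zigzag_e (hn : 2 < n) (δ : ZMod n) (ε : Bool) (i : ℤ) :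
    (zigzag hn δ ε).e i = {heads δ ε i, heads δ ε (i + 1)} := rfl

lemma zigzag_equiv_shift (hn : 2 < n) (δ : ZMod n) (ε : Bool) (t : ℤ) :
    (zigzag hn δ ε).Equiv (zigzag hn (δ + 2 * (t : ZMod n)) (ε ^^ t.bodd)) :=
  .inl ⟨3 * t, fun i => by
    rw [zigzag_e, zigzag_e, heads_add_three_mul, add_right_comm, heads_add_three_mul]⟩

lemma exists_zigzag_e_eq_of_subset_face (hn : 2 < n) {s : Bool} {x : ZMod n}
    {e e' : Finset (Bool ⊕ ZMod n)} (he : e ⊆ {inl s, inr x, inr (x + 1)})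
    (he' : e' ⊆ {inl s, inr x, inr (x + 1)}) (hcard : e.card = 2) (hcard' : e'.card = 2)
    (hne : e ≠ e') : ∃ δ ε j, ((zigzag hn δ ε).e j = e ∧ (zigzag hn δ ε).e (j + 1) = e') ∨
      ((zigzag hn δ ε).e j = e' ∧ (zigzag hn δ ε).e (j + 1) = e) := by
  have hRB : (zigzag hn x s).e 0 = {inr x, inr (x + 1)} ∧
      (zigzag hn x s).e (0 + 1) = {inl s, inr (x + 1)} := by
    simp [zigzag_e, heads, Finset.pair_comm]
  have hAB : (zigzag hn (x - 1) s).e 1 = {inl s, inr x} ∧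
      (zigzag hn (x - 1) s).e (1 + 1) = {inl s, inr (x + 1)} := by
    simp [zigzag_e, heads, Finset.pair_comm, show x - 1 + 2 = x + 1 by ring]
  have hAR : (zigzag hn (x - 2) s).e 2 = {inl s, inr x} ∧
      (zigzag hn (x - 2) s).e (2 + 1) = {inr x, inr (x + 1)} := by
    simp [zigzag_e, heads, Finset.pair_comm]
  rcases Finset.eq_pair_of_subset_triple he hcard with rfl | rfl | rfl <;>
    rcases Finset.eq_pair_of_subset_triple he' hcard' with rfl | rfl | rfl
  exacts [absurd rfl hne, ⟨_, _, _, .inl hAB⟩, ⟨_, _, _, .inl hAR⟩,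
    ⟨_, _, _, .inr hAB⟩, absurd rfl hne, ⟨_, _, _, .inr hRB⟩,
    ⟨_, _, _, .inr hAR⟩, ⟨_, _, _, .inl hRB⟩, absurd rfl hne]

lemma exists_zigzag_equiv (hn : 2 < n) (W : (BP n).Zigzag) :
    ∃ δ ε, (zigzag hn δ ε).Equiv W := by
  have htri : ∀ F ∈ (BP n).faces, F.card = 3 := fun _ => card_of_mem_faces (by omega)
  have htwo : ∀ e ∈ (BP n).edges, ((BP n).faces.filter fun f => e ⊆ f).card ≤ 2 :=
    fun _ => card_filter_faces_le_two hn
  obtain ⟨s, x, hF⟩ := mem_faces.mp (W.f_mem 0)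
  obtain ⟨δ, ε, j, h | h⟩ := exists_zigzag_e_eq_of_subset_face hn (hF ▸ W.sub_left 0)
    (hF ▸ W.sub_right 0) (card_of_mem_edges (W.e_mem _)) (card_of_mem_edges (W.e_mem _))
    (W.edges_ne 0)
  · exact ⟨δ, ε, .inl ⟨j, Zigzag.e_eq_of_e_eq_of_e_add_one_eq htri htwo (a := 0)
      (by simpa using h.1.symm) (by simpa using h.2.symm)⟩⟩
  · refine ⟨δ, ε, .inr ⟨j + 1, fun i => ?_⟩⟩
    have := Zigzag.e_eq_of_e_eq_of_e_add_one_eq htri htwo (Z := (zigzag hn δ ε).reverse)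
      (W := W) (a := 0) (c := -(j + 1)) ?_ ?_ i
    · rw [this]; simp only [Zigzag.reverse]; ring_nf
    · simp only [Zigzag.reverse]; rw [zero_add, neg_neg, h.2]
    · simp only [Zigzag.reverse]
      rw [show -(0 + -(j + 1) + 1) = j by ring, h.1]

lemma zigzag_equiv_zero_or_one (hn : 2 < n) {k : ℕ} (hnk : n = 2 * k) (hk : Odd k)
    (δ : ZMod n) (ε : Bool) :
    (zigzag hn 0 true).Equiv (zigzag hn δ ε) ∨ (zigzag hn 1 true).Equiv (zigzag hn δ ε) := by
  have hflip (r : ZMod n) : (zigzag hn r true).Equiv (zigzag hn r false) := by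
    have := zigzag_equiv_shift hn r true k
    rwa [Int.cast_natCast, ← Nat.cast_ofNat, ← Nat.cast_mul, ← hnk, ZMod.natCast_self, add_zero,
      Int.bodd_natCast_of_odd hk] at this
  obtain ⟨r, hr, ε', h⟩ :
      ∃ r : ℤ, (r = 0 ∨ r = 1) ∧ ∃ ε', (zigzag hn r ε').Equiv (zigzag hn δ ε) := by
    set d : ℤ := (δ.val : ℤ)
    have hδ : ((d % 2 : ℤ) : ZMod n) + 2 * ((d / 2 : ℤ) : ZMod n) = δ := by
      have : ((d % 2 + 2 * (d / 2) : ℤ) : ZMod n) = δ := by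
        rw [Int.emod_add_mul_ediv]; simp [d]
      exact_mod_cast this
    have := zigzag_equiv_shift hn ((d % 2 : ℤ) : ZMod n) (ε ^^ (d / 2).bodd) (d / 2)
    rw [hδ, Bool.xor_assoc, Bool.xor_self, Bool.xor_false] at this
    exact ⟨d % 2, Int.emod_two_eq d, _, this⟩
  rcases hr with rfl | rfl <;> cases ε'
  · exact .inl ((hflip 0).trans (by simpa using h))
  · exact .inl (by simpa using h)
  · exact .inr ((hflip 1).trans (by simpa using h))
  · exact .inr (by simpa using h)

lemma exists_eq_of_zigzag_e_eq_rim (hn : 2 < n) {δ x : ZMod n} {ε : Bool} {j : ℤ}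
    (h : (zigzag hn δ ε).e j = {inr x, inr (x + 1)}) : ∃ q : ℤ, j = 3 * q ∧ x = δ + 2 * q := by
  obtain ⟨j₀, hj₀, q, rfl⟩ : ∃ j₀ : ℤ, (j₀ = 0 ∨ j₀ = 1 ∨ j₀ = 2) ∧ ∃ q, j = j₀ + 3 * q :=
    ⟨j % 3, by omega, j / 3, by omega⟩
  rw [zigzag_e, heads_add_three_mul, add_right_comm, heads_add_three_mul] at h
  rcases hj₀ with rfl | hj₀
  · refine ⟨q, by ring, (eq_of_rim_subset_face hn (s := true) ?_).symm⟩
    rw [← h]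
    simp [heads]
  · have : inl (ε ^^ q.bodd) ∈ ({inr x, inr (x + 1)} : Finset (Bool ⊕ ZMod n)) :=
      h ▸ by rcases hj₀ with rfl | rfl <;> simp [heads]
    simp at this

lemma not_zigzag_zero_equiv_one (hn : 2 < n) (heven : 2 ∣ n) :
    ¬ (zigzag hn 0 true).Equiv (zigzag hn 1 true) := by
  intro h
  obtain ⟨j, hj⟩ : ∃ j, (zigzag hn 0 true).e j = {inr 1, inr (1 + 1)} := by
    rcases h with ⟨c, hc⟩ | ⟨c, hc⟩
    exacts [⟨0 + c, by rw [← hc]; simp [zigzag_e, heads]⟩,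
      ⟨c - 0, by rw [← hc]; simp [zigzag_e, heads]⟩]
  obtain ⟨q, -, hq⟩ := exists_eq_of_zigzag_e_eq_rim hn hj
  have := congrArg (ZMod.castHom heven (ZMod 2)) hq
  rw [map_one, zero_add, map_mul, map_ofNat, show (2 : ZMod 2) = 0 by decide, zero_mul] at this
  exact one_ne_zero this

lemma zigzag_length (hn : 2 < n) {k : ℕ} (hnk : n = 2 * k) (hk : Odd k) (δ : ZMod n)
    (ε : Bool) : (zigzag hn δ ε).length = 3 * n := by
  refine Zigzag.length_eq_of_forall_le (by omega) (fun i => ?_) fun m hm hper => ?_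
  · rw [zigzag_e, zigzag_e, show ((3 * n : ℕ) : ℤ) = 3 * n by push_cast; ring,
      heads_add_three_mul, add_right_comm, heads_add_three_mul]
    have : Int.bodd n = false := by rw [hnk, Int.bodd_coe, Nat.bodd_mul]; rfl
    simp [this]
  · obtain ⟨q, hmq, hq⟩ := exists_eq_of_zigzag_e_eq_rim hn (x := δ) (j := m) (by
      rw [← zero_add (m : ℤ), hper]; simp [zigzag_e, heads])
    have hkq : (k : ℤ) ∣ q := by
      have : ((2 * q : ℤ) : ZMod n) = 0 := by push_cast; linear_combination -hq
      rw [ZMod.intCast_zmod_eq_zero_iff_dvd, hnk, Nat.cast_mul, Nat.cast_two] at this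
      exact Int.dvd_of_mul_dvd_mul_left two_ne_zero this
    have hbodd : q.bodd = false := by
      have hmem : heads δ ε (2 + 3 * q) ∈ (zigzag hn δ ε).e 2 := by
        rw [← hper, hmq, zigzag_e]; simp
      rw [heads_add_three_mul] at hmem
      have : (ε ^^ q.bodd) = ε := by simpa [zigzag_e, heads] using hmem
      simpa using congrArg (ε ^^ ·) this
    obtain ⟨c, rfl⟩ := hkq
    rw [Int.bodd_mul, Int.bodd_natCast_of_odd hk, Bool.true_and] at hbodd
    obtain ⟨d, rfl⟩ : ∃ d, c = 2 * d := ⟨c.div2, by simpa [hbodd] using (Int.bodd_add_div2 c).symm⟩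
    have hmd : (m : ℤ) = 3 * n * d := by rw [hmq, hnk]; push_cast; ring
    have hpos : (0 : ℤ) < m := by exact_mod_cast hm
    have hd : 1 ≤ d := by nlinarith
    have : (3 * n : ℤ) ≤ m := by rw [hmd]; nlinarith
    exact_mod_cast this

end BP

/-- For the `n`-gonal bipyramid `BP n` with `n = 2k` and `k` odd,
there are exactly two zigzags up to reversal, each of length `3n`. -/
theorem stmt4 (n k : ℕ) [NeZero n] (hnk : n = 2 * k) (hk : Odd k) (h2 : 2 ≤ k) :
    (∃ Z₁ Z₂ : (BP n).Zigzag, ¬ Z₁.Equiv Z₂ ∧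
      ∀ W : (BP n).Zigzag, Z₁.Equiv W ∨ Z₂.Equiv W) ∧
    ∀ W : (BP n).Zigzag, W.length = 3 * n := by
  have hn : 2 < n := by omega
  refine ⟨⟨BP.zigzag hn 0 true, BP.zigzag hn 1 true,
    BP.not_zigzag_zero_equiv_one hn ⟨k, hnk⟩, fun W => ?_⟩, fun W => ?_⟩
  · obtain ⟨δ, ε, hW⟩ := BP.exists_zigzag_equiv hn W
    exact (BP.zigzag_equiv_zero_or_one hn hnk hk δ ε).imp (·.trans hW) (·.trans hW)
  · obtain ⟨δ, ε, hW⟩ := BP.exists_zigzag_equiv hn W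
    rw [← hW.length_eq, BP.zigzag_length hn hnk hk]
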